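/- arXiv:2402.08494 — 2 statements merged into one kernel-verified Lean document; each statement's English description precedes it below -/
import Mathlib

section
/- Let α ≥ 0, β ≥ 0, D ≥ 0, b > 0 and R₀ ≥ 1, and for p ≥ 0 set s(p) = (b + p)/(b·R₀ + p) and S_f(p) = exp(−α·D·s(p) − β·D²·s(p)²). Then S_f is Lipschitz continuous on [0, ∞) with constant (α·D + 2·β·D²)·(R₀ − 1)/(b·R₀²): for all p, q ≥ 0, |S_f(p) − S_f(q)| ≤ (α·D + 2·β·D²)·((R₀ − 1)/(b·R₀²))·|p − q|. -/
/-- `exp(-x) - exp(-y) ≤ y - x` for `0 ≤ x ≤ y`. -/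
lemma exp_neg_lipschitz_aux {x y : ℝ} (hx : 0 ≤ x) (hxy : x ≤ y) :
    Real.exp (-x) - Real.exp (-y) ≤ y - x := by
  have h1 : Real.exp (-y) = Real.exp (-x) * Real.exp (-(y - x)) := by
    rw [← Real.exp_add]; ring_nf
  have h2 : 1 - (y - x) ≤ Real.exp (-(y - x)) := by
    have := Real.add_one_le_exp (-(y - x)); linarith
  have h3 : Real.exp (-x) ≤ 1 := by rw [← Real.exp_zero]; exact Real.exp_le_exp.2 (by linarith)
  have h4 : 0 < Real.exp (-x) := Real.exp_pos _
  nlinarith [Real.exp_pos (-(y - x))]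

lemma exp_neg_lipschitz {x y : ℝ} (hx : 0 ≤ x) (hy : 0 ≤ y) :
    |Real.exp (-x) - Real.exp (-y)| ≤ |x - y| := by
  rcases le_total x y with h | h
  · have h1 := exp_neg_lipschitz_aux hx h
    have h2 : Real.exp (-y) ≤ Real.exp (-x) := Real.exp_le_exp.2 (by linarith)
    rw [abs_of_nonneg (by linarith), abs_of_nonpos (by linarith)]
    linarith
  · have h1 := exp_neg_lipschitz_aux hy h
    have h2 : Real.exp (-x) ≤ Real.exp (-y) := Real.exp_le_exp.2 (by linarith)
    rw [abs_of_nonpos (by linarith), abs_of_nonneg (by linarith)]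
    linarith

/-- The oxygen-corrected surviving fraction
`S_f(p) = exp(−α·D·s(p) − β·D²·s(p)²)` with `s(p) = (b + p)/(b·R₀ + p)` is
Lipschitz on `[0, ∞)` with constant `(α·D + 2·β·D²)·(R₀ − 1)/(b·R₀²)`. -/
theorem surviving_fraction_lipschitz
    (α β D b R₀ : ℝ) (hα : 0 ≤ α) (hβ : 0 ≤ β) (hD : 0 ≤ D)
    (hb : 0 < b) (hR₀ : 1 ≤ R₀) :
    let s : ℝ → ℝ := fun p => (b + p) / (b * R₀ + p)
    let Sf : ℝ → ℝ := fun p => Real.exp (-(α * D * s p) - β * D ^ 2 * s p ^ 2)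
    ∀ p q : ℝ, 0 ≤ p → 0 ≤ q →
      |Sf p - Sf q| ≤ (α * D + 2 * β * D ^ 2) * ((R₀ - 1) / (b * R₀ ^ 2)) * |p - q| := by
  intro s Sf p q hp hq
  have hR0 : 0 < R₀ := lt_of_lt_of_le one_pos hR₀
  have hdp : 0 < b * R₀ + p := by nlinarith
  have hdq : 0 < b * R₀ + q := by nlinarith
  have hs_bounds : ∀ r : ℝ, 0 ≤ r → 0 ≤ s r ∧ s r ≤ 1 := by
    intro r hr
    have hd : 0 < b * R₀ + r := by nlinarith
    refine ⟨div_nonneg (by linarith) hd.le, ?_⟩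
    rw [div_le_one hd]; nlinarith
  obtain ⟨hsp0, hsp1⟩ := hs_bounds p hp
  obtain ⟨hsq0, hsq1⟩ := hs_bounds q hq
  -- Lipschitz bound for s
  have hdiff : s p - s q = (b * (R₀ - 1) * (p - q)) / ((b * R₀ + p) * (b * R₀ + q)) := by
    show (b + p) / (b * R₀ + p) - (b + q) / (b * R₀ + q) = _
    field_simp
    ring
  have hslip : |s p - s q| ≤ (R₀ - 1) / (b * R₀ ^ 2) * |p - q| := by
    rw [hdiff, abs_div, abs_mul, abs_mul]
    rw [abs_of_nonneg hb.le, abs_of_nonneg (by linarith : (0:ℝ) ≤ R₀ - 1),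
        abs_of_nonneg (by positivity : (0:ℝ) ≤ (b * R₀ + p) * (b * R₀ + q))]
    have hden : b * (b * R₀ ^ 2) ≤ (b * R₀ + p) * (b * R₀ + q) := by
      nlinarith [mul_nonneg hp hq, mul_nonneg (mul_pos hb hR0).le hp,
        mul_nonneg (mul_pos hb hR0).le hq]
    have h1 : b * (R₀ - 1) * |p - q| / ((b * R₀ + p) * (b * R₀ + q)) ≤
        b * (R₀ - 1) * |p - q| / (b * (b * R₀ ^ 2)) := by
      exact div_le_div_of_nonneg_left (mul_nonneg (mul_nonneg hb.le (by linarith)) (abs_nonneg _)) (by positivity) hden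
    have h2 : b * (R₀ - 1) * |p - q| / (b * (b * R₀ ^ 2)) =
        (R₀ - 1) / (b * R₀ ^ 2) * |p - q| := by
      field_simp
    linarith [h1, h2.le]
  -- exponent functions
  set gp := α * D * s p + β * D ^ 2 * s p ^ 2 with hgp
  set gq := α * D * s q + β * D ^ 2 * s q ^ 2 with hgq
  have hgp0 : 0 ≤ gp := by positivity
  have hgq0 : 0 ≤ gq := by positivity
  have hSf : |Sf p - Sf q| ≤ |gp - gq| := by
    have e1 : Sf p = Real.exp (-gp) := by simp [Sf, hgp]; ring_nf
    have e2 : Sf q = Real.exp (-gq) := by simp [Sf, hgq]; ring_nf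
    rw [e1, e2]
    exact exp_neg_lipschitz hgp0 hgq0
  have hg : |gp - gq| ≤ (α * D + 2 * β * D ^ 2) * |s p - s q| := by
    have key : gp - gq = α * D * (s p - s q) + β * D ^ 2 * ((s p - s q) * (s p + s q)) := by
      rw [hgp, hgq]; ring
    calc |gp - gq| ≤ |α * D * (s p - s q)| + |β * D ^ 2 * ((s p - s q) * (s p + s q))| := by
          rw [key]; exact abs_add_le _ _
      _ = α * D * |s p - s q| + β * D ^ 2 * (|s p - s q| * (s p + s q)) := by
          rw [abs_mul, abs_mul, abs_mul, abs_mul, abs_mul, abs_of_nonneg hα, abs_of_nonneg hD,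
              abs_of_nonneg hβ, abs_of_nonneg (sq_nonneg D),
              abs_of_nonneg (by linarith : (0:ℝ) ≤ s p + s q)]
      _ ≤ (α * D + 2 * β * D ^ 2) * |s p - s q| := by
          nlinarith [mul_nonneg (mul_nonneg (mul_nonneg hβ (sq_nonneg D)) (abs_nonneg (s p - s q)))
            (by linarith : (0:ℝ) ≤ 2 - (s p + s q))]
  have hconst : 0 ≤ α * D + 2 * β * D ^ 2 := by positivity
  calc |Sf p - Sf q| ≤ |gp - gq| := hSf
    _ ≤ (α * D + 2 * β * D ^ 2) * |s p - s q| := hg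
    _ ≤ (α * D + 2 * β * D ^ 2) * ((R₀ - 1) / (b * R₀ ^ 2) * |p - q|) :=
        mul_le_mul_of_nonneg_left hslip hconst
    _ = (α * D + 2 * β * D ^ 2) * ((R₀ - 1) / (b * R₀ ^ 2)) * |p - q| := by ring
end

section
/- Let (Ω, μ) be a finite measure space, N ∈ L²(μ) with N ≥ 0 a.e., α_t > 0, and let α ≥ 0, β ≥ 0, D ≥ 0, b > 0, R₀ ≥ 1; for p ≥ 0 set s(p) = (b + p)/(b·R₀ + p) and S_f(p) = exp(−α·D·s(p) − β·D²·s(p)²), and define TCP(u) = exp(−∫_Ω N(x)·S_f(u(x)/α_t) dμ(x)). Then for all u, v ∈ L²(μ) with u ≥ 0 and v ≥ 0 a.e., |TCP(u) − TCP(v)| ≤ (1/α_t)·(α·D + 2·β·D²)·((R₀ − 1)/(b·R₀²))·‖N‖_{L²(μ)}·‖u − v‖_{L²(μ)}. In particular, the Tumor Control Probability is a Lipschitz continuous functional of the tissue oxygen concentration with respect to the L² norm on the cone L²₊(μ) of nonnegative L² functions. -/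
/-!
The oxygen factor `s` maps `[0, ∞)` into `[0, 1]` with slope `b (R₀ - 1) / (b R₀ + p)²`, at most
`(R₀ - 1) / (b R₀²)`; on `[0, 1]` the exponent `α D s + β D² s²` has slope at most `α D + 2 β D²`;
and `exp` is 1-Lipschitz on `(-∞, 0]`. Hence `S_f` is Lipschitz on `[0, ∞)` with values in
`(0, 1]`. As `N ≥ 0`, the integral inside `TCP` is nonnegative, so `|TCP u - TCP v|` is at most the
difference of the integrals, which Cauchy–Schwarz bounds by `‖N‖₂ ‖u - v‖₂` times the Lipschitz
constant of `p ↦ S_f (p / α_t)`.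
-/

open MeasureTheory

theorem Real.abs_exp_sub_exp_le_of_nonpos {x y : ℝ} (hx : x ≤ 0) (hy : y ≤ 0) :
    |Real.exp x - Real.exp y| ≤ |x - y| := by
  wlog hyx : y ≤ x generalizing x y
  · rw [abs_sub_comm, abs_sub_comm x]; exact this hy hx (le_of_not_ge hyx)
  rw [abs_of_nonneg (sub_nonneg.2 (Real.exp_le_exp.2 hyx)), abs_of_nonneg (sub_nonneg.2 hyx)]
  have hgap : 1 - Real.exp (y - x) ≤ x - y := by linarith [Real.add_one_le_exp (y - x)]
  calc Real.exp x - Real.exp y = Real.exp x * (1 - Real.exp (y - x)) := by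
        rw [mul_sub, ← Real.exp_add]; ring_nf
    _ ≤ 1 * (x - y) := mul_le_mul (Real.exp_le_one_iff.2 hx) hgap
        (sub_nonneg.2 (Real.exp_le_one_iff.2 (by linarith))) zero_le_one
    _ = x - y := one_mul _

theorem abs_exp_neg_quadratic_sub_le {a c s t : ℝ} (ha : 0 ≤ a) (hc : 0 ≤ c)
    (hs₀ : 0 ≤ s) (hs₁ : s ≤ 1) (ht₀ : 0 ≤ t) (ht₁ : t ≤ 1) :
    |Real.exp (-(a * s) - c * s ^ 2) - Real.exp (-(a * t) - c * t ^ 2)| ≤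
      (a + 2 * c) * |s - t| := by
  have hfactor : (-(a * s) - c * s ^ 2) - (-(a * t) - c * t ^ 2) =
      -((a + c * (s + t)) * (s - t)) := by ring
  have hslope : |a + c * (s + t)| ≤ a + 2 * c := by
    rw [abs_of_nonneg (by positivity)]; nlinarith
  calc _ ≤ |(-(a * s) - c * s ^ 2) - (-(a * t) - c * t ^ 2)| :=
        Real.abs_exp_sub_exp_le_of_nonpos (by nlinarith) (by nlinarith)
    _ ≤ (a + 2 * c) * |s - t| := by
        rw [hfactor, abs_neg, abs_mul]; exact mul_le_mul_of_nonneg_right hslope (abs_nonneg _)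

section Holder

variable {Ω : Type*} [MeasurableSpace Ω] {μ : Measure Ω}

theorem integral_abs_mul_le_eLpNorm_two_mul {f g : Ω → ℝ} (hf : MemLp f 2 μ)
    (hg : MemLp g 2 μ) :
    ∫ x, |f x * g x| ∂μ ≤ (eLpNorm f 2 μ).toReal * (eLpNorm g 2 μ).toReal := by
  have hfg : eLpNorm (f * g) 1 μ ≤ eLpNorm f 2 μ * eLpNorm g 2 μ := by
    simpa only [smul_eq_mul] using
      eLpNorm_smul_le_mul_eLpNorm (p := 2) (q := 2) (r := 1) (φ := f) hg.1 hf.1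
  calc ∫ x, |f x * g x| ∂μ = (eLpNorm (f * g) 1 μ).toReal := by
        simp only [← Real.norm_eq_abs, eLpNorm_one_eq_lintegral_enorm, Pi.mul_apply]
        exact integral_norm_eq_lintegral_enorm (hf.1.mul hg.1)
    _ ≤ (eLpNorm f 2 μ * eLpNorm g 2 μ).toReal :=
        ENNReal.toReal_mono (ENNReal.mul_ne_top hf.eLpNorm_ne_top hg.eLpNorm_ne_top) hfg
    _ = _ := ENNReal.toReal_mul

theorem abs_integral_sub_le_of_ae_abs_sub_le {f g N w : Ω → ℝ} (hf : Integrable f μ)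
    (hg : Integrable g μ) (hN : MemLp N 2 μ) (hw : MemLp w 2 μ) {C : ℝ} (hC : 0 ≤ C)
    (h : ∀ᵐ x ∂μ, |f x - g x| ≤ C * |N x * w x|) :
    |∫ x, f x ∂μ - ∫ x, g x ∂μ| ≤ C * (eLpNorm N 2 μ).toReal * (eLpNorm w 2 μ).toReal := by
  have hNw : Integrable (fun x => |N x * w x|) μ := (hN.integrable_mul hw).abs
  rw [← integral_sub hf hg, mul_assoc]
  calc |∫ x, f x - g x ∂μ| ≤ ∫ x, |f x - g x| ∂μ := abs_integral_le_integral_abs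
    _ ≤ ∫ x, C * |N x * w x| ∂μ := integral_mono_ae (hf.sub hg).abs (hNw.const_mul C) h
    _ = C * ∫ x, |N x * w x| ∂μ := integral_const_mul C _
    _ ≤ _ := mul_le_mul_of_nonneg_left (integral_abs_mul_le_eLpNorm_two_mul hN hw) hC

end Holder

noncomputable def oxygenFactor (b R₀ p : ℝ) : ℝ := (b + p) / (b * R₀ + p)

noncomputable def survivingFraction (α β D b R₀ p : ℝ) : ℝ :=
  Real.exp (-(α * D * oxygenFactor b R₀ p) - β * D ^ 2 * oxygenFactor b R₀ p ^ 2)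

section OxygenFactor

variable {b R₀ p q : ℝ}

theorem oxygenFactor_nonneg (hb : 0 < b) (hR₀ : 1 ≤ R₀) (hp : 0 ≤ p) :
    0 ≤ oxygenFactor b R₀ p :=
  div_nonneg (by positivity) (by nlinarith)

theorem oxygenFactor_le_one (hb : 0 < b) (hR₀ : 1 ≤ R₀) (hp : 0 ≤ p) :
    oxygenFactor b R₀ p ≤ 1 :=
  div_le_one_of_le₀ (by nlinarith) (by nlinarith)

theorem abs_oxygenFactor_sub_le (hb : 0 < b) (hR₀ : 1 ≤ R₀) (hp : 0 ≤ p) (hq : 0 ≤ q) :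
    |oxygenFactor b R₀ p - oxygenFactor b R₀ q| ≤ (R₀ - 1) / (b * R₀ ^ 2) * |p - q| := by
  have hbR₀ : 0 < b * R₀ := by nlinarith
  have hsub : oxygenFactor b R₀ p - oxygenFactor b R₀ q =
      b * (R₀ - 1) * (p - q) / ((b * R₀ + p) * (b * R₀ + q)) := by
    unfold oxygenFactor; field_simp; ring
  have hden : (b * R₀) ^ 2 ≤ (b * R₀ + p) * (b * R₀ + q) := by nlinarith
  rw [hsub, abs_div, abs_mul, abs_of_nonneg (by nlinarith : 0 ≤ b * (R₀ - 1)),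
    abs_of_pos (by positivity : 0 < (b * R₀ + p) * (b * R₀ + q))]
  calc b * (R₀ - 1) * |p - q| / ((b * R₀ + p) * (b * R₀ + q))
      ≤ b * (R₀ - 1) * |p - q| / (b * R₀) ^ 2 :=
        div_le_div_of_nonneg_left (mul_nonneg (by nlinarith) (abs_nonneg _)) (by positivity) hden
    _ = (R₀ - 1) / (b * R₀ ^ 2) * |p - q| := by field_simp

end OxygenFactor

section SurvivingFraction

variable {α β D b R₀ : ℝ}

theorem survivingFraction_nonneg (p : ℝ) : 0 ≤ survivingFraction α β D b R₀ p :=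
  (Real.exp_pos _).le

theorem survivingFraction_le_one (hα : 0 ≤ α) (hβ : 0 ≤ β) (hD : 0 ≤ D) (hb : 0 < b)
    (hR₀ : 1 ≤ R₀) {p : ℝ} (hp : 0 ≤ p) : survivingFraction α β D b R₀ p ≤ 1 := by
  have := oxygenFactor_nonneg hb hR₀ hp
  exact Real.exp_le_one_iff.2 (by nlinarith [mul_nonneg hα hD, mul_nonneg hβ (sq_nonneg D)])

theorem measurable_survivingFraction : Measurable (survivingFraction α β D b R₀) := by
  unfold survivingFraction oxygenFactor; fun_prop

theorem abs_survivingFraction_sub_le (hα : 0 ≤ α) (hβ : 0 ≤ β) (hD : 0 ≤ D) (hb : 0 < b)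
    (hR₀ : 1 ≤ R₀) {p q : ℝ} (hp : 0 ≤ p) (hq : 0 ≤ q) :
    |survivingFraction α β D b R₀ p - survivingFraction α β D b R₀ q| ≤
      (α * D + 2 * β * D ^ 2) * ((R₀ - 1) / (b * R₀ ^ 2)) * |p - q| := by
  calc _ ≤ (α * D + 2 * (β * D ^ 2)) * |oxygenFactor b R₀ p - oxygenFactor b R₀ q| :=
        abs_exp_neg_quadratic_sub_le (by positivity) (by positivity)
          (oxygenFactor_nonneg hb hR₀ hp) (oxygenFactor_le_one hb hR₀ hp)
          (oxygenFactor_nonneg hb hR₀ hq) (oxygenFactor_le_one hb hR₀ hq)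
    _ ≤ (α * D + 2 * (β * D ^ 2)) * ((R₀ - 1) / (b * R₀ ^ 2) * |p - q|) :=
        mul_le_mul_of_nonneg_left (abs_oxygenFactor_sub_le hb hR₀ hp hq) (by positivity)
    _ = _ := by ring

end SurvivingFraction

section TumorControl

variable {Ω : Type*} [MeasurableSpace Ω] {μ : Measure Ω} {φ : ℝ → ℝ} {N : Ω → ℝ} {a : ℝ}

theorem integrable_mul_comp_div (hφ : Measurable φ) (hφ₀ : ∀ p, 0 ≤ p → 0 ≤ φ p)
    (hφ₁ : ∀ p, 0 ≤ p → φ p ≤ 1) (hN : Integrable N μ) (ha : 0 ≤ a) {w : Ω → ℝ}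
    (hw : AEStronglyMeasurable w μ) (hw₀ : 0 ≤ᵐ[μ] w) :
    Integrable (fun x => N x * φ (w x / a)) μ := by
  refine hN.mul_bdd (c := 1)
    (hφ.comp_aemeasurable (hw.aemeasurable.div_const a)).aestronglyMeasurable ?_
  filter_upwards [hw₀] with x hx
  have hp : 0 ≤ w x / a := div_nonneg hx ha
  rw [Real.norm_eq_abs, abs_of_nonneg (hφ₀ _ hp)]
  exact hφ₁ _ hp

theorem abs_exp_neg_integral_mul_comp_div_sub_le [IsFiniteMeasure μ] (hφ : Measurable φ)
    (hφ₀ : ∀ p, 0 ≤ p → 0 ≤ φ p) (hφ₁ : ∀ p, 0 ≤ p → φ p ≤ 1) {K : ℝ}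
    (hφK : ∀ p q, 0 ≤ p → 0 ≤ q → |φ p - φ q| ≤ K * |p - q|)
    (hN : MemLp N 2 μ) (hN₀ : 0 ≤ᵐ[μ] N) (ha : 0 < a) {u v : Ω → ℝ}
    (hu : MemLp u 2 μ) (hv : MemLp v 2 μ) (hu₀ : 0 ≤ᵐ[μ] u) (hv₀ : 0 ≤ᵐ[μ] v) :
    |Real.exp (-∫ x, N x * φ (u x / a) ∂μ) - Real.exp (-∫ x, N x * φ (v x / a) ∂μ)| ≤
      K / a * (eLpNorm N 2 μ).toReal * (eLpNorm (u - v) 2 μ).toReal := by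
  have hK : 0 ≤ K := by simpa using (abs_nonneg _).trans (hφK 1 0 zero_le_one le_rfl)
  have hN₁ : Integrable N μ := hN.integrable one_le_two
  have hint {w : Ω → ℝ} (hw : MemLp w 2 μ) (hw₀ : 0 ≤ᵐ[μ] w) :
      Integrable (fun x => N x * φ (w x / a)) μ :=
    integrable_mul_comp_div hφ hφ₀ hφ₁ hN₁ ha.le hw.1 hw₀
  have hnonneg {w : Ω → ℝ} (hw₀ : 0 ≤ᵐ[μ] w) : 0 ≤ ∫ x, N x * φ (w x / a) ∂μ :=
    integral_nonneg_of_ae <| by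
      filter_upwards [hN₀, hw₀] with x hNx hwx
      exact mul_nonneg hNx (hφ₀ _ (div_nonneg hwx ha.le))
  have hpointwise : ∀ᵐ x ∂μ, |N x * φ (u x / a) - N x * φ (v x / a)| ≤
      K / a * |N x * (u - v) x| := by
    filter_upwards [hN₀, hu₀, hv₀] with x hNx hux hvx
    rw [← mul_sub, abs_mul, abs_mul, Pi.sub_apply, abs_of_nonneg hNx]
    calc N x * |φ (u x / a) - φ (v x / a)| ≤ N x * (K * |u x / a - v x / a|) :=
          mul_le_mul_of_nonneg_left (hφK _ _ (div_nonneg hux ha.le) (div_nonneg hvx ha.le)) hNx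
      _ = K / a * (N x * |u x - v x|) := by
          rw [← sub_div, abs_div, abs_of_pos ha]; ring
  calc _ ≤ |-∫ x, N x * φ (u x / a) ∂μ - -∫ x, N x * φ (v x / a) ∂μ| :=
        Real.abs_exp_sub_exp_le_of_nonpos (neg_nonpos.2 (hnonneg hu₀))
          (neg_nonpos.2 (hnonneg hv₀))
    _ = |∫ x, N x * φ (u x / a) ∂μ - ∫ x, N x * φ (v x / a) ∂μ| := by
        rw [neg_sub_neg, abs_sub_comm]
    _ ≤ _ := abs_integral_sub_le_of_ae_abs_sub_le (hint hu hu₀) (hint hv hv₀) hN (hu.sub hv)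
        (div_nonneg hK ha.le) hpointwise

end TumorControl

/-- The Tumor Control Probability
`TCP(u) = exp(−∫ N(x)·S_f(u(x)/α_t) dμ)` is Lipschitz continuous with respect
to the `L²` norm on the cone `L²₊(μ)` of nonnegative `L²` functions, with
constant `(1/α_t)·(α·D + 2·β·D²)·((R₀ − 1)/(b·R₀²))·‖N‖_{L²(μ)}`. -/
theorem TCP_lipschitz
    {Ω : Type*} [MeasurableSpace Ω] (μ : Measure Ω) [IsFiniteMeasure μ]
    (N : Ω → ℝ) (hN : MemLp N 2 μ) (hN0 : 0 ≤ᵐ[μ] N)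
    (αt : ℝ) (hαt : 0 < αt)
    (α β D b R₀ : ℝ) (hα : 0 ≤ α) (hβ : 0 ≤ β) (hD : 0 ≤ D)
    (hb : 0 < b) (hR₀ : 1 ≤ R₀) :
    let s : ℝ → ℝ := fun p => (b + p) / (b * R₀ + p)
    let Sf : ℝ → ℝ := fun p => Real.exp (-(α * D * s p) - β * D ^ 2 * s p ^ 2)
    let TCP : (Ω → ℝ) → ℝ := fun u => Real.exp (-∫ x, N x * Sf (u x / αt) ∂μ)
    ∀ u v : Ω → ℝ, MemLp u 2 μ → MemLp v 2 μ →
      (0 ≤ᵐ[μ] u) → (0 ≤ᵐ[μ] v) →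
      |TCP u - TCP v| ≤
        (1 / αt) * (α * D + 2 * β * D ^ 2) * ((R₀ - 1) / (b * R₀ ^ 2)) *
          (eLpNorm N 2 μ).toReal * (eLpNorm (u - v) 2 μ).toReal := by
  intro s Sf TCP u v hu hv hu0 hv0
  refine le_of_le_of_eq (abs_exp_neg_integral_mul_comp_div_sub_le measurable_survivingFraction
    (fun p _ => survivingFraction_nonneg p) (fun p => survivingFraction_le_one hα hβ hD hb hR₀)
    (fun p q => abs_survivingFraction_sub_le hα hβ hD hb hR₀) hN hN0 hαt hu hv hu0 hv0) ?_
  ring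
end
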